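/- arXiv:2101.04392 — 3 statements merged into one kernel-verified Lean document; each statement's English description precedes it below -/
import Mathlib

section
/- Suppose the cost functional L : X^{N+2} × U^{N+1} → ℝ is bounded below and upper semicontinuous, the dynamics F_k(·,·,ω) are continuous, the constraint maps g^k_i and θ_i are upper semicontinuous and bounded below, X is a finite-dimensional Banach space, and U is a nonempty compact metric space. Then for any ξ and c ∈ ℝ^m: c ∈ S(ξ) if and only if the robust constrained optimal value v_ξ(c) = sup over admissible controls u of inf over scenarios w of L(x_ξ^w(u), u) is finite. Moreover, in that case the supremum is attained by some optimal control. -/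
/-- Trajectory of the discrete-time control system `x_{k+1} = F_k(x_k, u_k, ω_k)`, `x_0 = ξ`. -/
def traj {X U W : Type*} (F : ℕ → X → U → W → X) (ξ : X) (u : ℕ → U) (w : ℕ → W) : ℕ → X
  | 0 => ξ
  | k + 1 => F k (traj F ξ u w k) (u k) (w k)

/-- `u` is admissible for `(ξ, c)`: for every scenario, the mixed and end-point
constraints hold (componentwise, thresholds `c`). -/
def Adm {X U W : Type*} {m : ℕ} (N : ℕ) (F : ℕ → X → U → W → X) (Ω : ℕ → Set W)
    (g : ℕ → X → U → Fin m → ℝ) (θ : X → Fin m → ℝ) (ξ : X) (c : Fin m → ℝ)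
    (u : ℕ → U) : Prop :=
  ∀ w : ℕ → W, (∀ k, w k ∈ Ω k) →
    (∀ k ≤ N, c ≤ g k (traj F ξ u w k) (u k)) ∧ c ≤ θ (traj F ξ u w (N + 1))

/-- The set of robust sustainable thresholds `S(ξ)`. -/
def SST {X U W : Type*} {m : ℕ} (N : ℕ) (F : ℕ → X → U → W → X) (Ω : ℕ → Set W)
    (g : ℕ → X → U → Fin m → ℝ) (θ : X → Fin m → ℝ) (ξ : X) : Set (Fin m → ℝ) :=
  {c | ∃ u : ℕ → U, Adm N F Ω g θ ξ c u}

/-! The control space `ℕ → U` is compact by Tychonoff, and every trajectory depends continuously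
on the control. Hence the admissible set, an intersection of superlevel sets of upper
semicontinuous functions, is closed and thus compact, and the worst-case value, an infimum of
upper semicontinuous functions bounded below, is upper semicontinuous. It therefore attains its
maximum on the admissible set whenever that set is nonempty; when it is empty, the supremum
is `⊥`. -/

section RobustControl

variable {X U W : Type*} [TopologicalSpace X] [TopologicalSpace U] {m N : ℕ}
  (F : ℕ → X → U → W → X) (Ω : ℕ → Set W) (g : ℕ → X → U → Fin m → ℝ) (θ : X → Fin m → ℝ)
  (L : (ℕ → X) → (ℕ → U) → ℝ) (ξ : X) (c : Fin m → ℝ)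

noncomputable def worstCaseValue (u : ℕ → U) : ℝ :=
  ⨅ w : {w : ℕ → W // ∀ k, w k ∈ Ω k}, L (traj F ξ u w.1) u

variable {F Ω g θ L}

theorem continuous_traj {w : ℕ → W} (hF : ∀ k, Continuous fun p : X × U => F k p.1 p.2 (w k))
    (k : ℕ) : Continuous fun u : ℕ → U => traj F ξ u w k := by
  induction k with
  | zero => exact continuous_const
  | succ k ih => exact (hF k).comp (ih.prodMk (continuous_apply k))

theorem isClosed_setOf_adm (hF : ∀ k, ∀ ω ∈ Ω k, Continuous fun p : X × U => F k p.1 p.2 ω)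
    (hg : ∀ k i, UpperSemicontinuous fun p : X × U => g k p.1 p.2 i)
    (hθ : ∀ i, UpperSemicontinuous fun x => θ x i) :
    IsClosed {u : ℕ → U | Adm N F Ω g θ ξ c u} := by
  simp only [Adm, Pi.le_def, Set.ofPred_forall, Set.ofPred_and]
  refine isClosed_iInter fun w => isClosed_iInter fun hw => ?_
  have htraj := continuous_traj ξ fun k => hF k (w k) (hw k)
  refine IsClosed.inter ?_ ?_
  · exact isClosed_iInter fun k => isClosed_iInter fun _ => isClosed_iInter fun i =>
      ((hg k i).comp ((htraj k).prodMk (continuous_apply k))).isClosed_preimage (c i)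
  · exact isClosed_iInter fun i => ((hθ i).comp (htraj (N + 1))).isClosed_preimage (c i)

theorem upperSemicontinuous_worstCaseValue
    (hF : ∀ k, ∀ ω ∈ Ω k, Continuous fun p : X × U => F k p.1 p.2 ω)
    (hL : UpperSemicontinuous fun p : (ℕ → X) × (ℕ → U) => L p.1 p.2)
    (hL_bdd : ∃ M : ℝ, ∀ x u, M ≤ L x u) :
    UpperSemicontinuous (worstCaseValue F Ω L ξ) := by
  obtain ⟨M, hM⟩ := hL_bdd
  refine upperSemicontinuous_ciInf (fun u => ⟨M, ?_⟩) fun w => ?_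
  · rintro _ ⟨w, rfl⟩
    exact hM _ _
  · exact hL.comp ((continuous_pi (continuous_traj ξ fun k => hF k (w.1 k) (w.2 k))).prodMk
      continuous_id)

theorem exists_adm_isMaxOn_worstCaseValue [CompactSpace U]
    (hF : ∀ k, ∀ ω ∈ Ω k, Continuous fun p : X × U => F k p.1 p.2 ω)
    (hg : ∀ k i, UpperSemicontinuous fun p : X × U => g k p.1 p.2 i)
    (hθ : ∀ i, UpperSemicontinuous fun x => θ x i)
    (hL : UpperSemicontinuous fun p : (ℕ → X) × (ℕ → U) => L p.1 p.2)
    (hL_bdd : ∃ M : ℝ, ∀ x u, M ≤ L x u) (hc : c ∈ SST N F Ω g θ ξ) :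
    ∃ u, Adm N F Ω g θ ξ c u ∧
      IsMaxOn (worstCaseValue F Ω L ξ) {u | Adm N F Ω g θ ξ c u} u :=
  ((upperSemicontinuous_worstCaseValue ξ hF hL hL_bdd).upperSemicontinuousOn _).exists_isMaxOn hc
    (isClosed_setOf_adm ξ c hF hg hθ).isCompact

end RobustControl

theorem stmt3_general {X U W : Type*} [NormedAddCommGroup X]
    [MetricSpace U] [CompactSpace U]
    {m N : ℕ} (F : ℕ → X → U → W → X) (Ω : ℕ → Set W)
    (g : ℕ → X → U → Fin m → ℝ) (θ : X → Fin m → ℝ)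
    (hF : ∀ k, ∀ ω ∈ Ω k, Continuous fun p : X × U => F k p.1 p.2 ω)
    (hg_usc : ∀ k i, UpperSemicontinuous fun p : X × U => g k p.1 p.2 i)
    (hθ_usc : ∀ i, UpperSemicontinuous fun x => θ x i)
    (L : (ℕ → X) → (ℕ → U) → ℝ)
    (hL_usc : UpperSemicontinuous fun p : (ℕ → X) × (ℕ → U) => L p.1 p.2)
    (hL_bdd : ∃ M : ℝ, ∀ x u, M ≤ L x u)
    (ξ : X) (c : Fin m → ℝ) :
    (c ∈ SST N F Ω g θ ξ ↔
      ∃ r : ℝ, sSup {v : EReal | ∃ u : ℕ → U, Adm N F Ω g θ ξ c u ∧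
        v = ((⨅ w : {w : ℕ → W // ∀ k, w k ∈ Ω k}, L (traj F ξ u w.1) u : ℝ) : EReal)}
        = (r : EReal)) ∧
    (c ∈ SST N F Ω g θ ξ → ∃ u : ℕ → U, Adm N F Ω g θ ξ c u ∧
      ∀ u' : ℕ → U, Adm N F Ω g θ ξ c u' →
        (⨅ w : {w : ℕ → W // ∀ k, w k ∈ Ω k}, L (traj F ξ u' w.1) u') ≤
        ⨅ w : {w : ℕ → W // ∀ k, w k ∈ Ω k}, L (traj F ξ u w.1) u) := by
  have optimal (hc : c ∈ SST N F Ω g θ ξ) :=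
    exists_adm_isMaxOn_worstCaseValue ξ c hF hg_usc hθ_usc hL_usc hL_bdd hc
  refine ⟨⟨fun hc => ?_, fun ⟨r, hr⟩ => ?_⟩, fun hc => ?_⟩
  · obtain ⟨u, hu, hmax⟩ := optimal hc
    refine ⟨worstCaseValue F Ω L ξ u, IsGreatest.csSup_eq ⟨⟨u, hu, rfl⟩, ?_⟩⟩
    rintro _ ⟨u', hu', rfl⟩
    exact EReal.coe_le_coe_iff.2 (hmax hu')
  · by_contra hc
    refine EReal.bot_ne_coe r ((sSup_eq_bot.2 ?_).symm.trans hr)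
    rintro _ ⟨u, hu, -⟩
    exact absurd ⟨u, hu⟩ hc
  · obtain ⟨u, hu, hmax⟩ := optimal hc
    exact ⟨u, hu, fun u' hu' => hmax hu'⟩

/-- Under the standing assumptions and for a bounded-below, upper semicontinuous cost `L`,
`c ∈ S(ξ)` iff the robust constrained optimal value is finite, and in that case the
supremum is attained by some admissible control. -/
theorem stmt3 {X U W : Type*} [NormedAddCommGroup X] [NormedSpace ℝ X] [FiniteDimensional ℝ X]
    [MetricSpace U] [CompactSpace U] [Nonempty U]
    {m N : ℕ} (F : ℕ → X → U → W → X) (Ω : ℕ → Set W) (hΩ : ∀ k, (Ω k).Nonempty)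
    (g : ℕ → X → U → Fin m → ℝ) (θ : X → Fin m → ℝ)
    (hF : ∀ k, ∀ ω ∈ Ω k, Continuous fun p : X × U => F k p.1 p.2 ω)
    (hg_usc : ∀ k i, UpperSemicontinuous fun p : X × U => g k p.1 p.2 i)
    (hg_bdd : ∀ k i, BddBelow (Set.range fun p : X × U => g k p.1 p.2 i))
    (hθ_usc : ∀ i, UpperSemicontinuous fun x => θ x i)
    (hθ_bdd : ∀ i, BddBelow (Set.range fun x => θ x i))
    (L : (ℕ → X) → (ℕ → U) → ℝ)
    (hL_usc : UpperSemicontinuous fun p : (ℕ → X) × (ℕ → U) => L p.1 p.2)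
    (hL_bdd : ∃ M : ℝ, ∀ x u, M ≤ L x u)
    (ξ : X) (c : Fin m → ℝ) :
    (c ∈ SST N F Ω g θ ξ ↔
      ∃ r : ℝ, sSup {v : EReal | ∃ u : ℕ → U, Adm N F Ω g θ ξ c u ∧
        v = ((⨅ w : {w : ℕ → W // ∀ k, w k ∈ Ω k}, L (traj F ξ u w.1) u : ℝ) : EReal)}
        = (r : EReal)) ∧
    (c ∈ SST N F Ω g θ ξ → ∃ u : ℕ → U, Adm N F Ω g θ ξ c u ∧
      ∀ u' : ℕ → U, Adm N F Ω g θ ξ c u' →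
        (⨅ w : {w : ℕ → W // ∀ k, w k ∈ Ω k}, L (traj F ξ u' w.1) u') ≤
        ⨅ w : {w : ℕ → W // ∀ k, w k ∈ Ω k}, L (traj F ξ u w.1) u) :=
  stmt3_general F Ω g θ hF hg_usc hθ_usc L hL_usc hL_bdd ξ c
end

section
/- Let c^0 ∈ S(ξ), let σ be a permutation of {1,...,m}, and generate c^1, ..., c^m inductively by c^i ∈ P_ξ(σ(i), c^{i-1}), where P_ξ is the Pareto operator. Then c^m is a strong Pareto maximum of S(ξ) and c^0 ≤ c^1 ≤ ... ≤ c^m componentwise; moreover v_ξ^{σ(i)}(c^{i-1}) = c^j_{σ(i)} for all i ∈ {1,...,m} and j ∈ {i,...,m}. -/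
/-- The threshold map `Γ(u)_i = inf_w min{ min_{k≤N} g^k_i(x_k,u_k), θ_i(x_{N+1}) }`. -/
noncomputable def Gam {X U W : Type*} {m : ℕ} (N : ℕ) (F : ℕ → X → U → W → X)
    (Ω : ℕ → Set W) (g : ℕ → X → U → Fin m → ℝ) (θ : X → Fin m → ℝ) (ξ : X)
    (u : ℕ → U) : Fin m → ℝ :=
  fun i => ⨅ w : {w : ℕ → W // ∀ k, w k ∈ Ω k},
    min ((Finset.Icc 0 N).inf' (Finset.nonempty_Icc.2 (Nat.zero_le N))
          fun k => g k (traj F ξ u w.1 k) (u k) i)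
        (θ (traj F ξ u w.1 (N + 1)) i)

/-- Controls that are optimal for the maximin problem `v_ξ^i(c)`:
admissible for threshold `c` and maximizing `inf_w L^i = Γ(·)_i` among admissible controls. -/
def OptCtrl {X U W : Type*} {m : ℕ} (N : ℕ) (F : ℕ → X → U → W → X) (Ω : ℕ → Set W)
    (g : ℕ → X → U → Fin m → ℝ) (θ : X → Fin m → ℝ) (ξ : X)
    (i : Fin m) (c : Fin m → ℝ) (u : ℕ → U) : Prop :=
  Adm N F Ω g θ ξ c u ∧
    ∀ u' : ℕ → U, Adm N F Ω g θ ξ c u' →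
      Gam N F Ω g θ ξ u' i ≤ Gam N F Ω g θ ξ u i

/-- The Pareto operator `P_ξ(i,c)`: images under `Γ` of controls optimal for `v_ξ^i(c)`. -/
noncomputable def ParetoOp {X U W : Type*} {m : ℕ} (N : ℕ) (F : ℕ → X → U → W → X)
    (Ω : ℕ → Set W) (g : ℕ → X → U → Fin m → ℝ) (θ : X → Fin m → ℝ) (ξ : X)
    (i : Fin m) (c : Fin m → ℝ) : Set (Fin m → ℝ) :=
  Gam N F Ω g θ ξ '' {u | OptCtrl N F Ω g θ ξ i c u}

/-- The optimal value `v_ξ^i(c)` of the maximin problem with objective `Γ(·)_i`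
over controls admissible for threshold `c`. -/
noncomputable def vval {X U W : Type*} {m : ℕ} (N : ℕ) (F : ℕ → X → U → W → X)
    (Ω : ℕ → Set W) (g : ℕ → X → U → Fin m → ℝ) (θ : X → Fin m → ℝ) (ξ : X)
    (i : Fin m) (c : Fin m → ℝ) : ℝ :=
  sSup {r | ∃ u : ℕ → U, Adm N F Ω g θ ξ c u ∧ r = Gam N F Ω g θ ξ u i}

section Helpers

variable {X U W : Type*} {m : ℕ} {N : ℕ} {F : ℕ → X → U → W → X} {Ω : ℕ → Set W}
  {g : ℕ → X → U → Fin m → ℝ} {θ : X → Fin m → ℝ} {ξ : X}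

lemma gam_bdd (hg_bdd : ∀ k i, BddBelow (Set.range fun p : X × U => g k p.1 p.2 i))
    (hθ_bdd : ∀ i, BddBelow (Set.range fun x => θ x i)) (u : ℕ → U) (i : Fin m) :
    BddBelow (Set.range fun w : {w : ℕ → W // ∀ k, w k ∈ Ω k} =>
      min ((Finset.Icc 0 N).inf' (Finset.nonempty_Icc.2 (Nat.zero_le N))
            fun k => g k (traj F ξ u w.1 k) (u k) i)
          (θ (traj F ξ u w.1 (N + 1)) i)) := by
  refine ⟨min ((Finset.Icc 0 N).inf' (Finset.nonempty_Icc.2 (Nat.zero_le N))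
      fun k => (hg_bdd k i).choose) ((hθ_bdd i).choose), ?_⟩
  rintro r ⟨w, rfl⟩
  refine min_le_min ?_ ((hθ_bdd i).choose_spec (Set.mem_range_self _))
  refine Finset.le_inf' _ _ fun k hk => le_trans (Finset.inf'_le _ hk) ?_
  exact (hg_bdd k i).choose_spec (Set.mem_range_self (traj F ξ u w k, u k))

lemma gam_le_term (hg_bdd : ∀ k i, BddBelow (Set.range fun p : X × U => g k p.1 p.2 i))
    (hθ_bdd : ∀ i, BddBelow (Set.range fun x => θ x i)) (u : ℕ → U)
    (w : ℕ → W) (hw : ∀ k, w k ∈ Ω k) (i : Fin m) :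
    Gam N F Ω g θ ξ u i ≤
      min ((Finset.Icc 0 N).inf' (Finset.nonempty_Icc.2 (Nat.zero_le N))
            fun k => g k (traj F ξ u w k) (u k) i)
          (θ (traj F ξ u w (N + 1)) i) :=
  ciInf_le (gam_bdd hg_bdd hθ_bdd u i) (⟨w, hw⟩ : {w : ℕ → W // ∀ k, w k ∈ Ω k})

lemma adm_le_gam (hΩ : ∀ k, (Ω k).Nonempty) {c : Fin m → ℝ} {u : ℕ → U}
    (hc : Adm N F Ω g θ ξ c u) : c ≤ Gam N F Ω g θ ξ u := by
  have : Nonempty {w : ℕ → W // ∀ k, w k ∈ Ω k} :=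
    ⟨⟨fun k => (hΩ k).some, fun k => (hΩ k).some_mem⟩⟩
  intro i
  refine le_ciInf fun w => le_min ?_ ((hc w.1 w.2).2 i)
  exact Finset.le_inf' _ _ fun k hk => (hc w.1 w.2).1 k (Finset.mem_Icc.mp hk).2 i

lemma adm_gam (hg_bdd : ∀ k i, BddBelow (Set.range fun p : X × U => g k p.1 p.2 i))
    (hθ_bdd : ∀ i, BddBelow (Set.range fun x => θ x i)) (u : ℕ → U) :
    Adm N F Ω g θ ξ (Gam N F Ω g θ ξ u) u := by
  intro w hw
  constructor
  · intro k hk i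
    exact le_trans (gam_le_term hg_bdd hθ_bdd u w hw i)
      (le_trans (min_le_left _ _)
        (Finset.inf'_le _ (Finset.mem_Icc.mpr ⟨Nat.zero_le _, hk⟩)))
  · intro i
    exact le_trans (gam_le_term hg_bdd hθ_bdd u w hw i) (min_le_right _ _)

lemma adm_mono {c c' : Fin m → ℝ} {u : ℕ → U} (hcc : c ≤ c')
    (h : Adm N F Ω g θ ξ c' u) : Adm N F Ω g θ ξ c u := by
  intro w hw
  obtain ⟨h1, h2⟩ := h w hw
  exact ⟨fun k hk => le_trans hcc (h1 k hk), le_trans hcc h2⟩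

end Helpers

/-- Starting from `c^0 ∈ S(ξ)` and iterating the Pareto operator along a permutation σ,
the final threshold `c^m` is a strong Pareto maximum of `S(ξ)`, the sequence is
componentwise nondecreasing, and `v_ξ^{σ(i)}(c^{i-1}) = c^j_{σ(i)}` for all `j ≥ i`. -/
theorem stmt7 {X U W : Type*} [NormedAddCommGroup X] [NormedSpace ℝ X] [FiniteDimensional ℝ X]
    [MetricSpace U] [CompactSpace U] [Nonempty U]
    {m N : ℕ} (F : ℕ → X → U → W → X) (Ω : ℕ → Set W) (hΩ : ∀ k, (Ω k).Nonempty)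
    (g : ℕ → X → U → Fin m → ℝ) (θ : X → Fin m → ℝ)
    (hF : ∀ k, ∀ ω ∈ Ω k, Continuous fun p : X × U => F k p.1 p.2 ω)
    (hg_usc : ∀ k i, UpperSemicontinuous fun p : X × U => g k p.1 p.2 i)
    (hg_bdd : ∀ k i, BddBelow (Set.range fun p : X × U => g k p.1 p.2 i))
    (hθ_usc : ∀ i, UpperSemicontinuous fun x => θ x i)
    (hθ_bdd : ∀ i, BddBelow (Set.range fun x => θ x i))
    (ξ : X) (σ : Equiv.Perm (Fin m)) (c : Fin (m + 1) → Fin m → ℝ)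
    (h0 : c 0 ∈ SST N F Ω g θ ξ)
    (hstep : ∀ i : Fin m, c i.succ ∈ ParetoOp N F Ω g θ ξ (σ i) (c i.castSucc)) :
    (c (Fin.last m) ∈ SST N F Ω g θ ξ ∧
      ∀ d ∈ SST N F Ω g θ ξ, c (Fin.last m) ≤ d → d = c (Fin.last m)) ∧
    (∀ i : Fin m, c i.castSucc ≤ c i.succ) ∧
    (∀ i : Fin m, ∀ j : Fin (m + 1), i.castSucc < j →
      vval N F Ω g θ ξ (σ i) (c i.castSucc) = c j (σ i)) := by
  classical
  choose u hopt heq using hstep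
  have hmono_step : ∀ i : Fin m, c i.castSucc ≤ c i.succ := fun i =>
    (heq i) ▸ adm_le_gam hΩ (hopt i).1
  have hmono : Monotone c := Fin.monotone_iff_le_succ.mpr hmono_step
  have hSST : ∀ j : Fin (m + 1), c j ∈ SST N F Ω g θ ξ := by
    intro j
    induction j using Fin.cases with
    | zero => exact h0
    | succ k =>
      refine ⟨u k, ?_⟩
      rw [← heq k]
      exact adm_gam hg_bdd hθ_bdd (u k)
  have hkey : ∀ i k : Fin m, i ≤ k → c k.succ (σ i) = c i.succ (σ i) := by
    intro i k hik
    refine le_antisymm ?_ (hmono (Fin.succ_le_succ_iff.mpr hik) (σ i))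
    have hadm : Adm N F Ω g θ ξ (c i.castSucc) (u k) :=
      adm_mono (hmono (Fin.castSucc_le_castSucc_iff.mpr hik)) (hopt k).1
    calc c k.succ (σ i) = Gam N F Ω g θ ξ (u k) (σ i) := (congrFun (heq k) (σ i)).symm
      _ ≤ Gam N F Ω g θ ξ (u i) (σ i) := (hopt i).2 (u k) hadm
      _ = c i.succ (σ i) := congrFun (heq i) (σ i)
  have hcomp : ∀ i : Fin m, ∀ j : Fin (m + 1), i.castSucc < j →
      c j (σ i) = c i.succ (σ i) := by
    intro i j hij
    induction j using Fin.cases with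
    | zero => exact absurd hij (Fin.not_lt_zero _)
    | succ k => exact hkey i k (Fin.castSucc_lt_succ_iff.mp hij)
  refine ⟨⟨hSST (Fin.last m), ?_⟩, hmono_step, ?_⟩
  · intro d hd hled
    obtain ⟨u', hu'⟩ := hd
    funext l
    set i := σ.symm l with hi
    have hl : σ i = l := σ.apply_symm_apply l
    have h1 : c i.castSucc ≤ d := le_trans (hmono (le_of_lt (Fin.castSucc_lt_last i))) hled
    have h2 : Adm N F Ω g θ ξ (c i.castSucc) u' := adm_mono h1 hu'
    refine le_antisymm ?_ (hled l)
    calc d l = d (σ i) := by rw [hl]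
      _ ≤ Gam N F Ω g θ ξ u' (σ i) := adm_le_gam hΩ hu' (σ i)
      _ ≤ Gam N F Ω g θ ξ (u i) (σ i) := (hopt i).2 u' h2
      _ = c i.succ (σ i) := congrFun (heq i) (σ i)
      _ = c (Fin.last m) (σ i) := (hcomp i (Fin.last m) (Fin.castSucc_lt_last i)).symm
      _ = c (Fin.last m) l := by rw [hl]
  · intro i j hij
    rw [hcomp i j hij]
    apply IsGreatest.csSup_eq
    constructor
    · exact ⟨u i, (hopt i).1, (congrFun (heq i) (σ i)).symm⟩
    · rintro r ⟨u', hu', rfl⟩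
      calc Gam N F Ω g θ ξ u' (σ i) ≤ Gam N F Ω g θ ξ (u i) (σ i) := (hopt i).2 u' hu'
        _ = c i.succ (σ i) := congrFun (heq i) (σ i)
end

section
/- If the set S(ξ) of robust sustainable thresholds has the property that for every c ∈ S(ξ) there exists a strong Pareto maximum c* ∈ S(ξ) with c* ≥ c componentwise, then S(ξ) equals both the strong Pareto front plus ℝ^m_- and the weak Pareto front plus ℝ^m_-. -/
/-- The strong Pareto front of `S`: elements not dominated by another element of `S`. -/
def StrongFront {m : ℕ} (S : Set (Fin m → ℝ)) : Set (Fin m → ℝ) :=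
  {c ∈ S | ∀ d ∈ S, c ≤ d → d = c}

/-- The weak Pareto front of `S`: elements not strongly dominated by another element of `S`. -/
def WeakFront {m : ℕ} (S : Set (Fin m → ℝ)) : Set (Fin m → ℝ) :=
  {c ∈ S | ¬ ∃ d ∈ S, ∀ i, c i < d i}

lemma strong_sub_weak {m : ℕ} (hm : 0 < m) (S : Set (Fin m → ℝ)) :
    StrongFront S ⊆ WeakFront S := by
  rintro c ⟨hcS, hmax⟩
  refine ⟨hcS, ?_⟩
  rintro ⟨d, hdS, hd⟩
  have hle : c ≤ d := fun i => (hd i).le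
  have := hmax d hdS hle
  exact absurd (congrFun this ⟨0, hm⟩) (ne_of_gt (hd ⟨0, hm⟩))

/-- If `S(ξ)` is downward closed and every element is dominated by a strong Pareto
maximum, then `S(ξ)` equals both the strong Pareto front plus `ℝ^m_-` and the weak
Pareto front plus `ℝ^m_-`. -/
theorem stmt9 {m : ℕ} (hm : 0 < m) (S : Set (Fin m → ℝ))
    (hdown : {x | ∃ a ∈ S, ∃ b : Fin m → ℝ, b ≤ 0 ∧ x = a + b} = S)
    (hmax : ∀ c ∈ S, ∃ cs ∈ StrongFront S, c ≤ cs) :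
    S = {x | ∃ a ∈ StrongFront S, ∃ b : Fin m → ℝ, b ≤ 0 ∧ x = a + b} ∧
    S = {x | ∃ a ∈ WeakFront S, ∃ b : Fin m → ℝ, b ≤ 0 ∧ x = a + b} := by
  have hsub : ∀ x ∈ S, ∃ a ∈ StrongFront S, ∃ b : Fin m → ℝ, b ≤ 0 ∧ x = a + b := by
    intro x hx
    obtain ⟨cs, hcs, hle⟩ := hmax x hx
    exact ⟨cs, hcs, x - cs, fun i => by simpa using hle i, by ring⟩
  have hback : ∀ (T : Set (Fin m → ℝ)), T ⊆ S →
      {x | ∃ a ∈ T, ∃ b : Fin m → ℝ, b ≤ 0 ∧ x = a + b} ⊆ S := by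
    rintro T hT x ⟨a, ha, b, hb, hx⟩
    rw [← hdown]
    exact ⟨a, hT ha, b, hb, hx⟩
  constructor
  · apply le_antisymm
    · exact hsub
    · exact hback _ (fun c hc => hc.1)
  · apply le_antisymm
    · intro x hx
      obtain ⟨a, ha, b, hb, hx⟩ := hsub x hx
      exact ⟨a, strong_sub_weak hm S ha, b, hb, hx⟩
    · exact hback _ (fun c hc => hc.1)
end
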